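/- arXiv:2402.03975 — 2 statements merged into one kernel-verified Lean document; each statement's English description precedes it below -/
import Mathlib

section
/- Let G = ([n],E) be a strongly connected directed graph with m = |E| edges in which every vertex has an outgoing edge. Then the sets P^C (indexed by the directed cycles C of G) are pairwise disjoint, each P^C is an open convex cone in ℝ^m (closed under multiplication by positive scalars), and the complement ℝ^m ∖ U is contained in a finite union of affine hyperplanes; in particular ℝ^m ∖ U has Lebesgue measure zero. -/
open MeasureTheory

/-- The `k`-th edge of the closed walk determined by the list of vertices `c`
(from the `k`-th vertex to the next one, cyclically). -/
def cycleEdge {n : ℕ} (c : List (Fin n)) (k : Fin c.length) : Fin n × Fin n :=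
  (c.get k, c.get ⟨(k.1 + 1) % c.length, Nat.mod_lt _ (Nat.lt_of_le_of_lt (Nat.zero_le _) k.isLt)⟩)

/-- `C ⊆ E` is the edge set of a simple directed cycle of the graph `([n], E)`. -/
def IsCycle {n : ℕ} (E : Finset (Fin n × Fin n)) (C : Finset {e : Fin n × Fin n // e ∈ E}) :
    Prop :=
  ∃ (c : List (Fin n)) (h : ∀ k : Fin c.length, cycleEdge c k ∈ E),
    0 < c.length ∧ c.Nodup ∧
      C = Finset.image (fun k => (⟨cycleEdge c k, h k⟩ : {e : Fin n × Fin n // e ∈ E}))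
            Finset.univ

/-- Mean weight of a set of edges. -/
noncomputable def meanWeight {n : ℕ} {E : Finset (Fin n × Fin n)}
    (r : {e : Fin n × Fin n // e ∈ E} → ℝ) (C : Finset {e : Fin n × Fin n // e ∈ E}) : ℝ :=
  (∑ e ∈ C, r e) / C.card

/-- `C` is an optimal (minimum mean weight) cycle of the DMDP with weights `r`. -/
def IsOptCycle {n : ℕ} (E : Finset (Fin n × Fin n)) (r : {e : Fin n × Fin n // e ∈ E} → ℝ)
    (C : Finset {e : Fin n × Fin n // e ∈ E}) : Prop :=
  IsCycle E C ∧ ∀ C', IsCycle E C' → meanWeight r C ≤ meanWeight r C'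

/-- `P^C`: the set of weight vectors for which `C` is the unique optimal cycle. -/
def Pcell {n : ℕ} (E : Finset (Fin n × Fin n)) (C : Finset {e : Fin n × Fin n // e ∈ E}) :
    Set ({e : Fin n × Fin n // e ∈ E} → ℝ) :=
  {r | IsOptCycle E r C ∧ ∀ C', IsOptCycle E r C' → C' = C}

/-- `U := ∪_C P^C`. -/
def Ucell {n : ℕ} (E : Finset (Fin n × Fin n)) : Set ({e : Fin n × Fin n // e ∈ E} → ℝ) :=
  ⋃ C, Pcell E C

/-- The directed graph `([n], E)` is strongly connected. -/
def StronglyConnected {n : ℕ} (E : Finset (Fin n × Fin n)) : Prop :=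
  ∀ i j : Fin n, Relation.ReflTransGen (fun a b => (a, b) ∈ E) i j

/-!
`P^C` is the intersection, over the finitely many cycles `D ≠ C`, of the sets
`{r | meanWeight r C < meanWeight r D}`; since a mean weight is a linear function of `r`, these
are open half-spaces, whence `P^C` is an open convex cone. A weight vector outside `U` has two
distinct optimal cycles `C ≠ D` and so lies on the hyperplane `meanWeight r C = meanWeight r D`,
which is a genuine hyperplane because the coefficient vector of `meanWeight · C` determines `C`.
Cycles exist at all because iterating a choice of outgoing edges on the finite vertex set reaches
a periodic point, whose orbit is a cycle.
-/

open Function Finset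

theorem Function.exists_mem_periodicPts {α : Type*} [Finite α] [Nonempty α] (f : α → α) :
    ∃ x, x ∈ periodicPts f := by
  obtain ⟨x⟩ := ‹Nonempty α›
  obtain ⟨i, j, hij, heq⟩ := Set.finite_univ.exists_lt_map_eq_of_forall_mem
    (f := fun k => f^[k] x) fun _ => Set.mem_univ _
  refine ⟨f^[i] x, mk_mem_periodicPts (Nat.sub_pos_of_lt hij) ?_⟩
  change f^[j - i] (f^[i] x) = f^[i] x
  rw [← iterate_add_apply, Nat.sub_add_cancel hij.le]
  exact heq.symm

theorem MeasureTheory.Measure.addHaar_setOf_apply_eq {F : Type*} [NormedAddCommGroup F]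
    [NormedSpace ℝ F] [MeasurableSpace F] [BorelSpace F] [FiniteDimensional ℝ F]
    (μ : Measure F) [μ.IsAddHaarMeasure] {f : F →ₗ[ℝ] ℝ} (hf : f ≠ 0) (b : ℝ) :
    μ {x | f x = b} = 0 := by
  rcases Set.eq_empty_or_nonempty {x | f x = b} with h | ⟨x₀, hx₀⟩
  · rw [h, measure_empty]
  have : {x | f x = b} = (fun x => -x₀ + x) ⁻¹' (LinearMap.ker f) := by
    ext x
    simp only [Set.mem_ofPred_eq, Set.mem_preimage, SetLike.mem_coe, LinearMap.mem_ker, map_add,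
      map_neg, hx₀.out, neg_add_eq_zero]
    exact eq_comm
  rw [this, measure_preimage_add, addHaar_submodule μ _ (by rwa [Ne, LinearMap.ker_eq_top])]

theorem volume_setOf_dotProduct_eq {ι : Type*} [Fintype ι] {a : ι → ℝ} (ha : a ≠ 0) (b : ℝ) :
    volume {x : ι → ℝ | a ⬝ᵥ x = b} = 0 := by
  classical
  exact Measure.addHaar_setOf_apply_eq volume ((dotProductEquiv ℝ ι).map_ne_zero_iff.mpr ha) b

section MeanWeight

variable {α : Type*} [DecidableEq α]

noncomputable def meanWeightCoeff (C : Finset α) (e : α) : ℝ :=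
  if e ∈ C then (#C : ℝ)⁻¹ else 0

theorem meanWeightCoeff_ne_zero_iff {C : Finset α} {e : α} : meanWeightCoeff C e ≠ 0 ↔ e ∈ C := by
  by_cases he : e ∈ C
  · simp [meanWeightCoeff, he, ne_empty_of_mem he]
  · simp [meanWeightCoeff, he]

theorem meanWeightCoeff_injective : Injective (meanWeightCoeff : Finset α → α → ℝ) := by
  intro C D h
  ext e
  rw [← meanWeightCoeff_ne_zero_iff, h, meanWeightCoeff_ne_zero_iff]

end MeanWeight

variable {n : ℕ} {E : Finset (Fin n × Fin n)}

theorem meanWeight_eq_dotProduct (r : {e // e ∈ E} → ℝ) (C : Finset {e // e ∈ E}) :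
    meanWeight r C = meanWeightCoeff C ⬝ᵥ r := by
  simp only [meanWeight, meanWeightCoeff, dotProduct, ite_mul, zero_mul, sum_ite_mem, univ_inter,
    ← mul_sum, div_eq_inv_mul]

theorem meanWeight_smul (t : ℝ) (r : {e // e ∈ E} → ℝ) (C : Finset {e // e ∈ E}) :
    meanWeight (t • r) C = t * meanWeight r C := by
  simp only [meanWeight, Pi.smul_apply, smul_eq_mul, ← mul_sum, mul_div_assoc]

theorem continuous_meanWeight (C : Finset {e // e ∈ E}) :
    Continuous fun r : {e // e ∈ E} → ℝ => meanWeight r C :=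
  (continuous_finsetSum _ fun e _ => continuous_apply e).div_const _

theorem convex_setOf_meanWeight_lt (C D : Finset {e // e ∈ E}) :
    Convex ℝ {r : {e // e ∈ E} → ℝ | meanWeight r C < meanWeight r D} := by
  have : {r : {e // e ∈ E} → ℝ | meanWeight r C < meanWeight r D} =
      {r | (meanWeightCoeff C - meanWeightCoeff D) ⬝ᵥ r < 0} := by
    simp only [meanWeight_eq_dotProduct, sub_dotProduct, sub_neg]
  rw [this]
  exact convex_halfSpace_lt (dotProductEquiv ℝ _ _).isLinear 0

theorem exists_isCycle_of_mem_periodicPts {f : Fin n → Fin n} (hf : ∀ i, (i, f i) ∈ E) {x : Fin n}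
    (hx : x ∈ periodicPts f) : ∃ C, IsCycle E C := by
  set c := (List.range (minimalPeriod f x)).map fun k => f^[k] x with hc
  have hlen : c.length = minimalPeriod f x := by simp [hc]
  have hget : ∀ k : Fin c.length, c.get k = f^[k] x := by intro k; simp [hc]
  have hedge : ∀ k : Fin c.length, cycleEdge c k = (f^[k] x, f (f^[k] x)) := by
    intro k
    simp only [cycleEdge, hget, hlen, iterate_mod_minimalPeriod_eq, iterate_succ_apply']
  have hmem : ∀ k, cycleEdge c k ∈ E := fun k => hedge k ▸ hf _
  exact ⟨_, c, hmem, hlen ▸ minimalPeriod_pos_of_mem_periodicPts hx,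
    Cycle.nodup_coe_iff.mp nodup_periodicOrbit, rfl⟩

theorem exists_isCycle (hn : 0 < n) (hout : ∀ i : Fin n, ∃ j : Fin n, (i, j) ∈ E) :
    ∃ C, IsCycle E C := by
  choose f hf using hout
  have : Nonempty (Fin n) := ⟨⟨0, hn⟩⟩
  obtain ⟨x, hx⟩ := exists_mem_periodicPts f
  exact exists_isCycle_of_mem_periodicPts hf hx

theorem isOptCycle_smul_iff {t : ℝ} (ht : 0 < t) {r : {e // e ∈ E} → ℝ}
    {C : Finset {e // e ∈ E}} : IsOptCycle E (t • r) C ↔ IsOptCycle E r C := by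
  simp only [IsOptCycle, meanWeight_smul, mul_le_mul_iff_right₀ ht]

theorem smul_mem_Pcell {t : ℝ} (ht : 0 < t) {r : {e // e ∈ E} → ℝ} {C : Finset {e // e ∈ E}}
    (hr : r ∈ Pcell E C) : t • r ∈ Pcell E C := by
  simpa only [Pcell, Set.mem_ofPred_eq, isOptCycle_smul_iff ht] using hr

theorem disjoint_Pcell {C D : Finset {e // e ∈ E}} (h : C ≠ D) : Disjoint (Pcell E C) (Pcell E D) :=
  Set.disjoint_left.mpr fun _ hC hD => h (hD.2 C hC.1)

theorem Pcell_eq_iInter {C : Finset {e // e ∈ E}} (hC : IsCycle E C) :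
    Pcell E C = ⋂ (D) (_ : IsCycle E D) (_ : D ≠ C), {r | meanWeight r C < meanWeight r D} := by
  ext r
  simp only [Pcell, IsOptCycle, Set.mem_ofPred_eq, Set.mem_iInter]
  constructor
  · rintro ⟨⟨-, hmin⟩, huniq⟩ D hD hDC
    refine (hmin D hD).lt_of_ne fun h => hDC (huniq D ⟨hD, fun D' hD' => ?_⟩)
    exact h ▸ hmin D' hD'
  · intro h
    refine ⟨⟨hC, fun D hD => ?_⟩, fun D ⟨hD, hmin⟩ => ?_⟩
    · rcases eq_or_ne D C with rfl | hDC
      · rfl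
      · exact (h D hD hDC).le
    · by_contra hDC
      exact (hmin C hC).not_gt (h D hD hDC)

theorem isOpen_Pcell {C : Finset {e // e ∈ E}} (hC : IsCycle E C) : IsOpen (Pcell E C) := by
  rw [Pcell_eq_iInter hC]
  exact isOpen_iInter_of_finite fun D => isOpen_iInter_of_finite fun _ =>
    isOpen_iInter_of_finite fun _ => isOpen_lt (continuous_meanWeight C) (continuous_meanWeight D)

theorem convex_Pcell {C : Finset {e // e ∈ E}} (hC : IsCycle E C) : Convex ℝ (Pcell E C) := by
  rw [Pcell_eq_iInter hC]
  exact convex_iInter fun D => convex_iInter fun _ => convex_iInter fun _ =>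
    convex_setOf_meanWeight_lt C D

theorem exists_isOptCycle (hE : ∃ C, IsCycle E C) (r : {e // e ∈ E} → ℝ) :
    ∃ C, IsOptCycle E r C := by
  obtain ⟨C, hC, hmin⟩ :=
    Set.exists_min_image {C | IsCycle E C} (meanWeight r) (Set.toFinite _) hE
  exact ⟨C, hC, hmin⟩

theorem compl_Ucell_subset (hE : ∃ C, IsCycle E C) :
    (Ucell E)ᶜ ⊆ ⋃ p : {p : Finset {e // e ∈ E} × Finset {e // e ∈ E} // p.1 ≠ p.2},
      {r | meanWeight r p.1.1 = meanWeight r p.1.2} := by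
  intro r hr
  obtain ⟨C, hC⟩ := exists_isOptCycle hE r
  have : r ∉ Pcell E C := fun h => hr (Set.mem_iUnion.mpr ⟨C, h⟩)
  simp only [Pcell, Set.mem_ofPred_eq, hC, true_and, not_forall] at this
  obtain ⟨D, hD, hDC⟩ := this
  exact Set.mem_iUnion.mpr ⟨⟨(C, D), Ne.symm hDC⟩, le_antisymm (hC.2 D hD.1) (hD.2 C hC.1)⟩

theorem exists_hyperplanes_cover_compl_Ucell (hE : ∃ C, IsCycle E C) :
    ∃ (k : ℕ) (a : Fin k → {e // e ∈ E} → ℝ) (b : Fin k → ℝ),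
      (∀ i, a i ≠ 0) ∧ (Ucell E)ᶜ ⊆ ⋃ i, {x | a i ⬝ᵥ x = b i} := by
  let e := Finite.equivFin {p : Finset {e // e ∈ E} × Finset {e // e ∈ E} // p.1 ≠ p.2}
  refine ⟨_, fun i => meanWeightCoeff (e.symm i).1.1 - meanWeightCoeff (e.symm i).1.2, 0,
    fun i => sub_ne_zero.mpr (meanWeightCoeff_injective.ne (e.symm i).2),
    (compl_Ucell_subset hE).trans ?_⟩
  rw [← e.symm.surjective.iUnion_comp]
  refine Set.iUnion_mono fun i r hr => ?_
  simp [sub_dotProduct, ← meanWeight_eq_dotProduct, hr.out]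

theorem stmt0_general (n : ℕ) (hn : 0 < n) (E : Finset (Fin n × Fin n))
    (hout : ∀ i : Fin n, ∃ j : Fin n, (i, j) ∈ E) :
    (∀ C C' : Finset {e : Fin n × Fin n // e ∈ E}, IsCycle E C → IsCycle E C' → C ≠ C' →
        Pcell E C ∩ Pcell E C' = ∅) ∧
    (∀ C : Finset {e : Fin n × Fin n // e ∈ E}, IsCycle E C →
        IsOpen (Pcell E C) ∧ Convex ℝ (Pcell E C) ∧
          ∀ r ∈ Pcell E C, ∀ t : ℝ, 0 < t → t • r ∈ Pcell E C) ∧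
    (∃ (k : ℕ) (a : Fin k → {e : Fin n × Fin n // e ∈ E} → ℝ) (b : Fin k → ℝ),
        (∀ i, a i ≠ 0) ∧
        (Ucell E)ᶜ ⊆ ⋃ i, {x : {e : Fin n × Fin n // e ∈ E} → ℝ | ∑ e, a i e * x e = b i}) ∧
    volume (Ucell E)ᶜ = 0 := by
  obtain ⟨k, a, b, ha, hcover⟩ := exists_hyperplanes_cover_compl_Ucell (exists_isCycle hn hout)
  refine ⟨fun C C' _ _ h => (disjoint_Pcell h).inter_eq,
    fun C hC => ⟨isOpen_Pcell hC, convex_Pcell hC, fun r hr t ht => smul_mem_Pcell ht hr⟩,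
    ⟨k, a, b, ha, hcover⟩, ?_⟩
  exact measure_mono_null hcover
    (measure_iUnion_null fun i => volume_setOf_dotProduct_eq (ha i) (b i))

theorem stmt0 (n : ℕ) (hn : 0 < n) (E : Finset (Fin n × Fin n))
    (hsc : StronglyConnected E) (hout : ∀ i : Fin n, ∃ j : Fin n, (i, j) ∈ E) :
    (∀ C C' : Finset {e : Fin n × Fin n // e ∈ E}, IsCycle E C → IsCycle E C' → C ≠ C' →
        Pcell E C ∩ Pcell E C' = ∅) ∧
    (∀ C : Finset {e : Fin n × Fin n // e ∈ E}, IsCycle E C →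
        IsOpen (Pcell E C) ∧ Convex ℝ (Pcell E C) ∧
          ∀ r ∈ Pcell E C, ∀ t : ℝ, 0 < t → t • r ∈ Pcell E C) ∧
    (∃ (k : ℕ) (a : Fin k → {e : Fin n × Fin n // e ∈ E} → ℝ) (b : Fin k → ℝ),
        (∀ i, a i ≠ 0) ∧
        (Ucell E)ᶜ ⊆ ⋃ i, {x : {e : Fin n × Fin n // e ∈ E} → ℝ | ∑ e, a i e * x e = b i}) ∧
    volume (Ucell E)ᶜ = 0 :=
  stmt0_general n hn E hout
end

section
/- In the random model, for every α > 0, the probability that there exists an edge (i,j) ∈ E with Y_{ij}(r) ≤ r_{ij} ≤ Y_{ij}(r) + α (the inequalities interpreted in the extended reals) is at most α·m·φ. -/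
open MeasureTheory

/-- The threshold `Y_e(r)`: the infimum (in the extended reals) of the values `x` such that
some optimal cycle of the DMDP with weights `(x, r₋ₑ)` avoids the edge `e`. -/
noncomputable def Yedge {n : ℕ} (E : Finset (Fin n × Fin n))
    (e : {e : Fin n × Fin n // e ∈ E}) (r : {e : Fin n × Fin n // e ∈ E} → ℝ) : EReal :=
  sInf {x : EReal | ∃ x' : ℝ, x = (x' : EReal) ∧
    ∃ C : Finset {e : Fin n × Fin n // e ∈ E},
      IsOptCycle E (Function.update r e x') C ∧ e ∉ C}


/-!
The threshold `Y_e(r)` does not depend on `r_e`. It is also a measurable function of `r`: raising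
the weight of `e` keeps every optimal cycle that avoids `e` optimal, so the set of admissible `x`
is an up-set and `Y_e(r) < a` can be tested on rationals `x < a`. By independence, conditionally on
the other weights the event `Y_e ≤ r_e ≤ Y_e + α` asks the density-bounded `r_e` to land in an
interval of length `α`, which has probability at most `α φ`; a union bound over the `m` edges
concludes.
-/

open ProbabilityTheory

lemma setOf_le_coe_le_add_subset_Icc (v : EReal) (a : ℝ) :
    {x : ℝ | v ≤ x ∧ (x : EReal) ≤ v + a} ⊆ Set.Icc v.toReal (v.toReal + a) := by
  rintro x ⟨hvx, hxv⟩
  -- for `v = ⊥` or `v = ⊤` the set is empty, so the junk value `v.toReal = 0` is harmless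
  induction v using EReal.rec with
  | bot => simp at hxv
  | top => simp at hvx
  | coe y => exact ⟨by exact_mod_cast hvx, by exact_mod_cast hxv⟩

lemma withDensity_Icc_le {f : ℝ → ENNReal} {φ : ℝ} (hφ : 0 ≤ φ)
    (hbound : ∀ y, f y ≤ ENNReal.ofReal φ) (y a : ℝ) :
    volume.withDensity f (Set.Icc y (y + a)) ≤ ENNReal.ofReal (a * φ) := by
  rw [withDensity_apply _ measurableSet_Icc]
  calc ∫⁻ x in Set.Icc y (y + a), f x
      ≤ ∫⁻ _ in Set.Icc y (y + a), ENNReal.ofReal φ := lintegral_mono hbound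
    _ = ENNReal.ofReal (a * φ) := by
        rw [setLIntegral_const, Real.volume_Icc, add_sub_cancel_left, mul_comm,
          ENNReal.ofReal_mul' hφ]

lemma measurable_sInf_coe_of_monotone {β : Type*} [MeasurableSpace β] {A : ℝ → Set β}
    (hA : Monotone A) (hmeas : ∀ x, MeasurableSet (A x)) :
    Measurable fun b => sInf {y : EReal | ∃ x : ℝ, y = x ∧ b ∈ A x} := by
  refine measurable_of_Iio fun a => ?_
  have hpreimage : (fun b => sInf {y : EReal | ∃ x : ℝ, y = x ∧ b ∈ A x}) ⁻¹' Set.Iio a =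
      ⋃ (q : ℚ) (_ : ((q : ℝ) : EReal) < a), A q := by
    ext b
    simp only [Set.mem_preimage, Set.mem_Iio, Set.mem_iUnion, sInf_lt_iff, Set.mem_ofPred_eq]
    constructor
    · rintro ⟨_, ⟨x, rfl, hx⟩, hxa⟩
      obtain ⟨q, hxq, hqa⟩ : ∃ q : ℚ, x < q ∧ ((q : ℝ) : EReal) < a := by
        obtain ⟨z, hxz, hza⟩ := EReal.lt_iff_exists_real_btwn.1 hxa
        obtain ⟨q, hzq, hqz⟩ := exists_rat_btwn (EReal.coe_lt_coe_iff.1 hxz)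
        exact ⟨q, hzq, (EReal.coe_lt_coe_iff.2 hqz).trans hza⟩
      exact ⟨q, hqa, hA hxq.le hx⟩
    · rintro ⟨q, hqa, hq⟩
      exact ⟨(q : ℝ), ⟨q, rfl, hq⟩, hqa⟩
  rw [hpreimage]
  exact MeasurableSet.iUnion fun q => MeasurableSet.iUnion fun _ => hmeas q

section Independence

variable {Ω ι β γ : Type*} [MeasurableSpace Ω] {μ : Measure Ω}

lemma ProbabilityTheory.iIndepFun.indepFun_update [Fintype ι] [DecidableEq ι]
    [MeasurableSpace β] {X : ι → Ω → β} (hX : ∀ i, Measurable (X i)) (hind : iIndepFun X μ)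
    (j : ι) (c : β) :
    IndepFun (fun ω => Function.update (fun i => X i ω) j c) (X j) μ := by
  set S := Finset.univ.erase j
  have hdisj : Disjoint S {j} := Finset.disjoint_singleton_right.2 (Finset.notMem_erase j _)
  have hextend : Measurable fun (p : S → β) (i : ι) => if h : i ∈ S then p ⟨i, h⟩ else c :=
    measurable_pi_lambda _ fun i => by
      by_cases h : i ∈ S
      · simpa [h] using measurable_pi_apply (⟨i, h⟩ : S)
      · simp only [h, dite_false, measurable_const]
  convert (hind.indepFun_finset S {j} hdisj hX).comp hextend
    (measurable_pi_apply (⟨j, Finset.mem_singleton_self j⟩ : ({j} : Finset ι))) using 1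
  · funext ω i
    by_cases h : i = j
    · subst h; simp [S]
    · simp [S, h]
  · rfl

lemma measure_mem_le_of_indepFun [IsProbabilityMeasure μ] [MeasurableSpace β]
    [MeasurableSpace γ] {W : Ω → β} {Z : Ω → γ} (hW : Measurable W) (hZ : Measurable Z)
    (hind : IndepFun W Z μ) {T : Set (β × γ)} (hT : MeasurableSet T) {c : ENNReal}
    (hsection : ∀ b, μ.map Z (Prod.mk b ⁻¹' T) ≤ c) :
    μ {ω | (W ω, Z ω) ∈ T} ≤ c := by
  have : IsProbabilityMeasure (μ.map W) := Measure.isProbabilityMeasure_map hW.aemeasurable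
  calc μ {ω | (W ω, Z ω) ∈ T}
      = μ.map (fun ω => (W ω, Z ω)) T := (Measure.map_apply (hW.prodMk hZ) hT).symm
    _ = ((μ.map W).prod (μ.map Z)) T := by
        rw [(indepFun_iff_map_prod_eq_prod_map_map hW.aemeasurable hZ.aemeasurable).1 hind]
    _ = ∫⁻ b, μ.map Z (Prod.mk b ⁻¹' T) ∂(μ.map W) := Measure.prod_apply hT
    _ ≤ ∫⁻ _, c ∂(μ.map W) := lintegral_mono hsection
    _ = c := by simp


lemma measure_le_coe_le_add_le_of_update_invariant [Fintype ι] [DecidableEq ι]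
    [IsProbabilityMeasure μ] {X : Ω → ι → ℝ} (hmeas : ∀ i, Measurable fun ω => X ω i)
    (hindep : iIndepFun (fun i ω => X ω i) μ) {j : ι} {f : ℝ → ENNReal}
    (hdens : μ.map (fun ω => X ω j) = volume.withDensity f) {φ : ℝ} (hφ : 0 ≤ φ)
    (hbound : ∀ y, f y ≤ ENNReal.ofReal φ) {g : (ι → ℝ) → EReal} (hg : Measurable g)
    (hg_update : ∀ r t, g (Function.update r j t) = g r) (α : ℝ) :
    μ {ω | g (X ω) ≤ X ω j ∧ (X ω j : EReal) ≤ g (X ω) + α} ≤ ENNReal.ofReal (α * φ) := by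
  set T : Set ((ι → ℝ) × ℝ) := {p | g p.1 ≤ p.2 ∧ (p.2 : EReal) ≤ g p.1 + α}
  have hT : MeasurableSet T :=
    (measurableSet_le (hg.comp measurable_fst)
      (measurable_coe_real_ereal.comp measurable_snd)).inter
    (measurableSet_le (measurable_coe_real_ereal.comp measurable_snd)
      ((hg.comp measurable_fst).add_const _))
  have hevent : {ω | g (X ω) ≤ X ω j ∧ (X ω j : EReal) ≤ g (X ω) + α} =
      {ω | (Function.update (X ω) j 0, X ω j) ∈ T} := by
    simp only [T, Set.mem_ofPred_eq, hg_update]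
  rw [hevent]
  refine measure_mem_le_of_indepFun (measurable_update_left.comp (measurable_pi_lambda _ hmeas))
    (hmeas j) (hindep.indepFun_update hmeas j 0) hT fun r => ?_
  rw [hdens]
  exact (measure_mono (setOf_le_coe_le_add_subset_Icc (g r) α)).trans
    (withDensity_Icc_le hφ hbound _ _)

end Independence

section DMDP

variable {n : ℕ} {E : Finset (Fin n × Fin n)}

lemma meanWeight_update_of_notMem {r : {e : Fin n × Fin n // e ∈ E} → ℝ}
    {e : {e : Fin n × Fin n // e ∈ E}} {C : Finset {e : Fin n × Fin n // e ∈ E}} (he : e ∉ C)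
    (x : ℝ) : meanWeight (Function.update r e x) C = meanWeight r C := by
  unfold meanWeight
  congr 1
  exact Finset.sum_congr rfl fun e' he' => Function.update_of_ne (ne_of_mem_of_not_mem he' he) _ _

lemma meanWeight_mono {r r' : {e : Fin n × Fin n // e ∈ E} → ℝ} (h : r ≤ r')
    (C : Finset {e : Fin n × Fin n // e ∈ E}) : meanWeight r C ≤ meanWeight r' C :=
  div_le_div_of_nonneg_right (Finset.sum_le_sum fun e _ => h e) (Nat.cast_nonneg _)

lemma measurable_meanWeight (C : Finset {e : Fin n × Fin n // e ∈ E}) :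
    Measurable fun r : {e : Fin n × Fin n // e ∈ E} → ℝ => meanWeight r C := by
  unfold meanWeight
  fun_prop

lemma measurableSet_isOptCycle (C : Finset {e : Fin n × Fin n // e ∈ E}) :
    MeasurableSet {r | IsOptCycle E r C} := by
  simp only [IsOptCycle, Set.ofPred_and, Set.ofPred_forall]
  exact (MeasurableSet.const _).inter <| MeasurableSet.iInter fun C' =>
    MeasurableSet.iInter fun _ =>
      measurableSet_le (measurable_meanWeight C) (measurable_meanWeight C')

lemma monotone_setOf_isOptCycle_update_notMem (e : {e : Fin n × Fin n // e ∈ E}) :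
    Monotone fun x : ℝ => {r | ∃ C, IsOptCycle E (Function.update r e x) C ∧ e ∉ C} := by
  rintro x x' hxx' r ⟨C, ⟨hC, hopt⟩, he⟩
  refine ⟨C, ⟨hC, fun C' hC' => ?_⟩, he⟩
  rw [meanWeight_update_of_notMem he] at hopt ⊢
  exact (hopt C' hC').trans (meanWeight_mono (update_le_update_iff'.2 hxx') C')

lemma measurableSet_setOf_isOptCycle_update_notMem (e : {e : Fin n × Fin n // e ∈ E}) (x : ℝ) :
    MeasurableSet {r | ∃ C, IsOptCycle E (Function.update r e x) C ∧ e ∉ C} := by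
  rw [Set.ofPred_exists]
  exact MeasurableSet.iUnion fun C => ((measurableSet_isOptCycle C).preimage
    measurable_update_left).inter (MeasurableSet.const _)

lemma measurable_Yedge (e : {e : Fin n × Fin n // e ∈ E}) : Measurable (Yedge E e) :=
  measurable_sInf_coe_of_monotone (monotone_setOf_isOptCycle_update_notMem e)
    (measurableSet_setOf_isOptCycle_update_notMem e)

lemma Yedge_update (e : {e : Fin n × Fin n // e ∈ E}) (r : {e : Fin n × Fin n // e ∈ E} → ℝ)
    (t : ℝ) : Yedge E e (Function.update r e t) = Yedge E e r := by
  simp only [Yedge, Function.update_idem]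

end DMDP

open ProbabilityTheory in
theorem stmt2_general (n : ℕ) (E : Finset (Fin n × Fin n))
    (φ : ℝ) (hφ : 0 < φ)
    (Ω : Type*) [MeasurableSpace Ω] (μ : Measure Ω) [IsProbabilityMeasure μ]
    (X : Ω → {e : Fin n × Fin n // e ∈ E} → ℝ)
    (hmeas : ∀ e, Measurable fun ω => X ω e)
    (hindep : iIndepFun (fun e ω => X ω e) μ)
    (f : {e : Fin n × Fin n // e ∈ E} → ℝ → ENNReal)
    (hdens : ∀ e, Measure.map (fun ω => X ω e) μ = volume.withDensity (f e))
    (hbound : ∀ e y, f e y ≤ ENNReal.ofReal φ)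
    (α : ℝ) :
    μ {ω | ∃ e : {e : Fin n × Fin n // e ∈ E},
        Yedge E e (X ω) ≤ (X ω e : EReal) ∧
        (X ω e : EReal) ≤ Yedge E e (X ω) + (α : EReal)} ≤
      ENNReal.ofReal (α * E.card * φ) := by
  rw [Set.ofPred_exists]
  calc μ (⋃ e, {ω | Yedge E e (X ω) ≤ (X ω e : EReal) ∧
          (X ω e : EReal) ≤ Yedge E e (X ω) + (α : EReal)})
      ≤ ∑ e, μ {ω | Yedge E e (X ω) ≤ (X ω e : EReal) ∧
          (X ω e : EReal) ≤ Yedge E e (X ω) + (α : EReal)} := measure_iUnion_fintype_le _ _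
    _ ≤ ∑ _e : {e : Fin n × Fin n // e ∈ E}, ENNReal.ofReal (α * φ) :=
        Finset.sum_le_sum fun e _ => measure_le_coe_le_add_le_of_update_invariant hmeas hindep
          (hdens e) hφ.le (hbound e) (measurable_Yedge e) (Yedge_update e) α
    _ = ENNReal.ofReal (α * E.card * φ) := by
        rw [Finset.sum_const, Finset.card_univ, Fintype.card_coe, nsmul_eq_mul,
          ← ENNReal.ofReal_natCast, ← ENNReal.ofReal_mul (Nat.cast_nonneg _)]
        ring_nf

open ProbabilityTheory in
/-- In the random model, for every `α > 0`, the probability that some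
edge weight `r_e` lands in `[Y_e(r), Y_e(r) + α]` is at most `α · m · φ`. -/
theorem stmt2 (n : ℕ) (hn : 0 < n) (E : Finset (Fin n × Fin n))
    (hsc : StronglyConnected E) (hout : ∀ i : Fin n, ∃ j : Fin n, (i, j) ∈ E)
    (φ : ℝ) (hφ : 0 < φ)
    (Ω : Type*) [MeasurableSpace Ω] (μ : Measure Ω) [IsProbabilityMeasure μ]
    (X : Ω → {e : Fin n × Fin n // e ∈ E} → ℝ)
    (hmeas : ∀ e, Measurable fun ω => X ω e)
    (hindep : iIndepFun (fun e ω => X ω e) μ)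
    (f : {e : Fin n × Fin n // e ∈ E} → ℝ → ENNReal)
    (hdens : ∀ e, Measure.map (fun ω => X ω e) μ = volume.withDensity (f e))
    (hbound : ∀ e y, f e y ≤ ENNReal.ofReal φ)
    (α : ℝ) (hα : 0 < α) :
    μ {ω | ∃ e : {e : Fin n × Fin n // e ∈ E},
        Yedge E e (X ω) ≤ (X ω e : EReal) ∧
        (X ω e : EReal) ≤ Yedge E e (X ω) + (α : EReal)} ≤
      ENNReal.ofReal (α * E.card * φ) :=
  stmt2_general n E φ hφ Ω μ X hmeas hindep f hdens hbound α
end
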